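/- Let Ω ⊂ ℂⁿ be a bounded domain with smooth boundary which is convex, and let D(z) = dist(z, bΩ)². Then there exists an open neighborhood U of bΩ such that for all z ∈ U ∩ Ω and all V ∈ ℂⁿ, the real Hessian satisfies H_D(z)(V,V) ≤ |⟨∇D(z),V⟩|² / (2 D(z)). -/

import Mathlib

noncomputable section

open Complex Metric Set
open scoped Classical RealInnerProductSpace

/-- Signed distance to the boundary of `Ω`: negative inside `Ω`, positive outside. -/
def sdist {n : ℕ} (Ω : Set (EuclideanSpace ℂ (Fin n))) (z : EuclideanSpace ℂ (Fin n)) : ℝ :=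
  if z ∈ Ω then -Metric.infDist z (frontier Ω) else Metric.infDist z (frontier Ω)

/-- `⟨∂f(p),V⟩ = Σ_k f_{z_k}(p) V_k`, the complex gradient pairing. -/
def dDir {n : ℕ} (f : EuclideanSpace ℂ (Fin n) → ℂ) (p V : EuclideanSpace ℂ (Fin n)) : ℂ :=
  (1/2 : ℂ) * (fderiv ℝ f p V - Complex.I * fderiv ℝ f p (Complex.I • V))

/-- `Σ_k f_{z̄_k}(p) conj (V_k)`, the conjugate gradient pairing. -/
def dbarDir {n : ℕ} (f : EuclideanSpace ℂ (Fin n) → ℂ) (p V : EuclideanSpace ℂ (Fin n)) : ℂ :=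
  (1/2 : ℂ) * (fderiv ℝ f p V + Complex.I * fderiv ℝ f p (Complex.I • V))

/-- Complex Hessian `L_f(p)(V,W) = Σ_{j,k} ∂²f/∂z_j∂z̄_k(p) V_j conj (W_k)`. -/
def cHess {n : ℕ} (f : EuclideanSpace ℂ (Fin n) → ℂ) (p V W : EuclideanSpace ℂ (Fin n)) : ℂ :=
  dDir (fun z => dbarDir f z W) p V

/-- Real Hessian `H_f(p)(V,W) = Σ_{j,k} ∂²f/∂x_j∂x_k(p) V_j W_k` in the underlying
real coordinates of `ℂⁿ ≅ ℝ^{2n}`. -/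
def rHess {n : ℕ} (f : EuclideanSpace ℂ (Fin n) → ℝ) (p V W : EuclideanSpace ℂ (Fin n)) : ℝ :=
  fderiv ℝ (fun z => fderiv ℝ f z W) p V

/-- `Ω ⊂ ℂⁿ` has smooth (`C^∞`) boundary: the signed distance function is smooth on an
open neighborhood of `frontier Ω` and has unit gradient there. -/
def HasSmoothBoundary {n : ℕ} (Ω : Set (EuclideanSpace ℂ (Fin n))) : Prop :=
  ∃ U : Set (EuclideanSpace ℂ (Fin n)), IsOpen U ∧ frontier Ω ⊆ U ∧
    ContDiffOn ℝ (⊤ : ℕ∞) (sdist Ω) U ∧ ∀ z ∈ U, ‖fderiv ℝ (sdist Ω) z‖ = 1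

/-!
Write `δ` for the signed distance, so that `D = δ²` and `H_D = 2δ H_δ + 2 dδ ⊗ dδ`; inside `Ω`,
where `δ < 0`, the estimate is equivalent to `H_δ(z) ≥ 0`. Since `|∇δ| = 1` near `bΩ`, the
gradient `∇δ` is a null vector of the Hessian operator `A = D(∇δ)`, so `∇δ` is constant along the
straight line `z + t ∇δ(z)`, on which `δ` grows with unit speed: the line meets `bΩ` at time
`dist(z, bΩ)`. Differentiating `A ∇δ = 0` once more gives the Riccati equation `A' = -A²` along
this line, so `⟪A V, V⟫` decreases towards `bΩ`, where it is nonnegative by convexity (as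
`A ∇δ = 0`, the tangential condition controls every `V`).
-/

open Filter
open scoped Gradient Topology

section Eikonal

variable {E : Type*} [NormedAddCommGroup E] [InnerProductSpace ℝ E] [CompleteSpace E]
  {f : E → ℝ} {x : E}

theorem norm_gradient (f : E → ℝ) (x : E) : ‖∇ f x‖ = ‖fderiv ℝ f x‖ :=
  (InnerProductSpace.toDual ℝ E).symm.norm_map _

theorem ContDiffAt.gradient {m : WithTop ℕ∞} (hf : ContDiffAt ℝ (m + 1) f x) :
    ContDiffAt ℝ m (∇ f) x :=
  (InnerProductSpace.toDual ℝ E).symm.contDiff.contDiffAt.comp x (hf.fderiv_right le_rfl)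

theorem fderiv_fderiv_apply_eq_inner_fderiv_gradient (hf : ContDiffAt ℝ 2 f x) (v w : E) :
    fderiv ℝ (fun y => fderiv ℝ f y w) x v = ⟪fderiv ℝ (∇ f) x v, w⟫ := by
  have hG : DifferentiableAt ℝ (∇ f) x :=
    (ContDiffAt.gradient (m := 1) hf).differentiableAt one_ne_zero
  rw [show (fun y => fderiv ℝ f y w) = fun y => ⟪∇ f y, w⟫ from
      funext fun y => inner_gradient_left.symm,
    (hG.hasFDerivAt.inner ℝ (hasFDerivAt_const w x)).fderiv]
  simp

theorem inner_fderiv_gradient_comm (hf : ContDiffAt ℝ 2 f x) (v w : E) :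
    ⟪fderiv ℝ (∇ f) x v, w⟫ = ⟪fderiv ℝ (∇ f) x w, v⟫ := by
  have hdf : DifferentiableAt ℝ (fderiv ℝ f) x :=
    (hf.fderiv_right (m := 1) le_rfl).differentiableAt one_ne_zero
  have hsnd : ∀ a b : E, fderiv ℝ (fun y => fderiv ℝ f y b) x a = fderiv ℝ (fderiv ℝ f) x a b :=
    fun a b => by simp [fderiv_clm_apply hdf (differentiableAt_const b)]
  rw [← fderiv_fderiv_apply_eq_inner_fderiv_gradient hf,
    ← fderiv_fderiv_apply_eq_inner_fderiv_gradient hf, hsnd, hsnd]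
  exact hf.isSymmSndFDerivAt (by simp) v w

theorem fderiv_gradient_apply_gradient_eq_zero (hf : ContDiffAt ℝ 2 f x)
    (hunit : ∀ᶠ y in 𝓝 x, ‖∇ f y‖ = 1) : fderiv ℝ (∇ f) x (∇ f x) = 0 := by
  have hG : HasFDerivAt (∇ f) (fderiv ℝ (∇ f) x) x :=
    ((ContDiffAt.gradient (m := 1) hf).differentiableAt one_ne_zero).hasFDerivAt
  have hconst : HasFDerivAt (fun y => ⟪∇ f y, ∇ f y⟫) (0 : E →L[ℝ] ℝ) x :=
    (hasFDerivAt_const (1 : ℝ) x).congr_of_eventuallyEq <|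
      hunit.mono fun y hy => by simp [hy]
  -- `|∇f|² ≡ 1` differentiated in the direction `A ∇f`, then `A` moved across by symmetry
  have h := congr($((hG.inner ℝ hG).unique hconst) (fderiv ℝ (∇ f) x (∇ f x)))
  simp only [ContinuousLinearMap.comp_apply, ContinuousLinearMap.prod_apply,
    fderivInnerCLM_apply, zero_apply] at h
  rw [real_inner_comm, inner_fderiv_gradient_comm hf] at h
  exact (inner_self_eq_zero (𝕜 := ℝ)).mp (by linarith)

theorem fderiv_fderiv_gradient_apply_gradient (hf : ContDiffAt ℝ 3 f x)
    (hunit : ∀ᶠ y in 𝓝 x, ‖∇ f y‖ = 1) (v : E) :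
    fderiv ℝ (fderiv ℝ (∇ f)) x (∇ f x) v = -fderiv ℝ (∇ f) x (fderiv ℝ (∇ f) x v) := by
  have hG2 : ContDiffAt ℝ 2 (∇ f) x := ContDiffAt.gradient (m := 2) hf
  have hG : HasFDerivAt (∇ f) (fderiv ℝ (∇ f) x) x :=
    (hG2.differentiableAt two_ne_zero).hasFDerivAt
  have hA : HasFDerivAt (fderiv ℝ (∇ f)) (fderiv ℝ (fderiv ℝ (∇ f)) x) x :=
    ((hG2.fderiv_right (m := 1) le_rfl).differentiableAt one_ne_zero).hasFDerivAt
  have hzero : HasFDerivAt (fun y => fderiv ℝ (∇ f) y (∇ f y)) (0 : E →L[ℝ] E) x := by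
    refine (hasFDerivAt_const 0 x).congr_of_eventuallyEq ?_
    filter_upwards [hf.eventually (by simp), hunit.eventually_nhds] with y hfy hunity
    exact fderiv_gradient_apply_gradient_eq_zero (hfy.of_le (by norm_num)) hunity
  have h := congr($((hA.clm_apply hG).unique hzero) v)
  simp only [add_apply, ContinuousLinearMap.comp_apply,
    ContinuousLinearMap.flip_apply, zero_apply] at h
  rw [hG2.isSymmSndFDerivAt (by simp) (∇ f x) v]
  exact eq_neg_of_add_eq_zero_right h

end Eikonal

section GradientLine

variable {E : Type*} [NormedAddCommGroup E] [InnerProductSpace ℝ E] [CompleteSpace E]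
  {f : E → ℝ} {U : Set E} {x : E} {T : ℝ}

theorem hasDerivAt_add_smul {F : Type*} [NormedAddCommGroup F] [NormedSpace ℝ F] (x u : F)
    (t : ℝ) : HasDerivAt (fun s : ℝ => x + s • u) u t := by
  simpa using ((hasDerivAt_id t).smul_const u).const_add x

theorem gradient_add_smul_gradient (hU : IsOpen U) (hf : ContDiffOn ℝ 2 f U)
    (hunit : ∀ y ∈ U, ‖∇ f y‖ = 1) (hseg : ∀ t ∈ Icc 0 T, x + t • ∇ f x ∈ U) :
    ∀ t ∈ Icc 0 T, ∇ f (x + t • ∇ f x) = ∇ f x := by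
  have hft : ∀ t ∈ Icc 0 T, ContDiffAt ℝ 2 f (x + t • ∇ f x) :=
    fun t ht => hf.contDiffAt (hU.mem_nhds (hseg t ht))
  have hG : ∀ t ∈ Icc 0 T, ContDiffAt ℝ 1 (∇ f) (x + t • ∇ f x) :=
    fun t ht => ContDiffAt.gradient (m := 1) (hft t ht)
  have hderiv : ∀ t ∈ Icc 0 T, HasDerivAt (fun s => ∇ f (x + s • ∇ f x) - ∇ f x)
      (fderiv ℝ (∇ f) (x + t • ∇ f x) (∇ f x)) t := fun t ht =>
    (((hG t ht).differentiableAt one_ne_zero).hasFDerivAt.comp_hasDerivAt t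
      (hasDerivAt_add_smul x _ t)).sub_const _
  obtain ⟨C, hC⟩ : ∃ C, ∀ t ∈ Icc 0 T, ‖fderiv ℝ (∇ f) (x + t • ∇ f x)‖ ≤ C :=
    isCompact_Icc.exists_bound_of_continuousOn fun t ht =>
      (((hG t ht).fderiv_right (m := 0) le_rfl).continuousAt.comp (f := fun s : ℝ => x + s • ∇ f x)
        (hasDerivAt_add_smul x _ t).continuousAt).continuousWithinAt
  -- as `A ∇f = 0`, the derivative equals `-A (∇f(x + t ∇f x) - ∇f x)`, so Grönwall applies
  have hbound : ∀ t ∈ Ico 0 T, ‖fderiv ℝ (∇ f) (x + t • ∇ f x) (∇ f x)‖ ≤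
      C * ‖∇ f (x + t • ∇ f x) - ∇ f x‖ := by
    intro t ht
    have hmem := hseg t (Ico_subset_Icc_self ht)
    have hnull := fderiv_gradient_apply_gradient_eq_zero (hft t (Ico_subset_Icc_self ht))
      (eventually_of_mem (hU.mem_nhds hmem) hunit)
    calc ‖fderiv ℝ (∇ f) (x + t • ∇ f x) (∇ f x)‖
        = ‖fderiv ℝ (∇ f) (x + t • ∇ f x) (∇ f (x + t • ∇ f x) - ∇ f x)‖ := by
          rw [map_sub, hnull, zero_sub, norm_neg]
      _ ≤ ‖fderiv ℝ (∇ f) (x + t • ∇ f x)‖ * ‖∇ f (x + t • ∇ f x) - ∇ f x‖ :=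
          ContinuousLinearMap.le_opNorm _ _
      _ ≤ C * ‖∇ f (x + t • ∇ f x) - ∇ f x‖ :=
          mul_le_mul_of_nonneg_right (hC t (Ico_subset_Icc_self ht)) (norm_nonneg _)
  intro t ht
  exact sub_eq_zero.mp <| eq_zero_of_abs_deriv_le_mul_abs_self_of_eq_zero_right
    (fun s hs => (hderiv s hs).continuousAt.continuousWithinAt)
    (fun s hs => (hderiv s (Ico_subset_Icc_self hs)).hasDerivWithinAt) (by simp) hbound t ht

theorem apply_add_smul_gradient (hU : IsOpen U) (hf : ContDiffOn ℝ 2 f U)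
    (hunit : ∀ y ∈ U, ‖∇ f y‖ = 1) (hseg : ∀ t ∈ Icc 0 T, x + t • ∇ f x ∈ U) :
    ∀ t ∈ Icc 0 T, f (x + t • ∇ f x) = f x + t := by
  have hderiv : ∀ t ∈ Icc 0 T, HasDerivAt (fun s => f (x + s • ∇ f x) - s) 0 t := by
    intro t ht
    have hdf : HasFDerivAt f (fderiv ℝ f (x + t • ∇ f x)) (x + t • ∇ f x) :=
      ((hf.contDiffAt (hU.mem_nhds (hseg t ht))).differentiableAt two_ne_zero).hasFDerivAt
    have hx : x ∈ U := by simpa using hseg 0 ⟨le_rfl, ht.1.trans ht.2⟩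
    have hslope : fderiv ℝ f (x + t • ∇ f x) (∇ f x) = 1 := by
      rw [← inner_gradient_left, gradient_add_smul_gradient hU hf hunit hseg t ht,
        real_inner_self_eq_norm_sq, hunit x hx, one_pow]
    have h := (hdf.comp_hasDerivAt t (hasDerivAt_add_smul x _ t)).sub (hasDerivAt_id t)
    rwa [hslope, sub_self] at h
  intro t ht
  have h := constant_of_has_deriv_right_zero
    (fun s hs => (hderiv s hs).continuousAt.continuousWithinAt)
    (fun s hs => (hderiv s (Ico_subset_Icc_self hs)).hasDerivWithinAt) t ht
  simp only [zero_smul, add_zero, sub_zero] at h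
  linarith

theorem antitoneOn_inner_fderiv_gradient_add_smul_gradient (hU : IsOpen U)
    (hf : ContDiffOn ℝ 3 f U) (hunit : ∀ y ∈ U, ‖∇ f y‖ = 1)
    (hseg : ∀ t ∈ Icc 0 T, x + t • ∇ f x ∈ U) (V : E) :
    AntitoneOn (fun t => ⟪fderiv ℝ (∇ f) (x + t • ∇ f x) V, V⟫) (Icc 0 T) := by
  have hderiv : ∀ t ∈ Icc 0 T, HasDerivAt (fun s => ⟪fderiv ℝ (∇ f) (x + s • ∇ f x) V, V⟫)
      (-‖fderiv ℝ (∇ f) (x + t • ∇ f x) V‖ ^ 2) t := by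
    intro t ht
    have hft : ContDiffAt ℝ 3 f (x + t • ∇ f x) := hf.contDiffAt (hU.mem_nhds (hseg t ht))
    have hA : HasFDerivAt (fderiv ℝ (∇ f)) (fderiv ℝ (fderiv ℝ (∇ f)) (x + t • ∇ f x))
        (x + t • ∇ f x) :=
      (((ContDiffAt.gradient (m := 2) hft).fderiv_right (m := 1) le_rfl).differentiableAt
        one_ne_zero).hasFDerivAt
    have hAt : HasDerivAt (fun s => fderiv ℝ (∇ f) (x + s • ∇ f x) V)
        (fderiv ℝ (fderiv ℝ (∇ f)) (x + t • ∇ f x) (∇ f x) V) t := by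
      have h1 : HasDerivAt (fun s => fderiv ℝ (∇ f) (x + s • ∇ f x))
          (fderiv ℝ (fderiv ℝ (∇ f)) (x + t • ∇ f x) (∇ f x)) t :=
        hA.comp_hasDerivAt t (hasDerivAt_add_smul x (∇ f x) t)
      have h2 := h1.clm_apply (hasDerivAt_const t V)
      rwa [map_zero, add_zero] at h2
    -- the Riccati equation `A' = -A²` along a gradient line of an eikonal function
    have hRiccati := fderiv_fderiv_gradient_apply_gradient hft
      (eventually_of_mem (hU.mem_nhds (hseg t ht)) hunit) V
    rw [gradient_add_smul_gradient hU (hf.of_le (by norm_num)) hunit hseg t ht] at hRiccati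
    have h := hAt.inner ℝ (hasDerivAt_const t V)
    rwa [hRiccati, inner_zero_right, zero_add, inner_neg_left,
      inner_fderiv_gradient_comm (hft.of_le (by norm_num)) _ V, real_inner_self_eq_norm_sq] at h
  exact antitoneOn_of_hasDerivWithinAt_nonpos (convex_Icc 0 T)
    (fun t ht => (hderiv t ht).continuousAt.continuousWithinAt)
    (fun t ht => (hderiv t (interior_subset ht)).hasDerivWithinAt)
    (fun t _ => neg_nonpos.2 (sq_nonneg _))

theorem inner_fderiv_gradient_self_nonneg_of_tangent (hf : ContDiffAt ℝ 2 f x)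
    (hunit : ∀ᶠ y in 𝓝 x, ‖∇ f y‖ = 1)
    (htan : ∀ V, fderiv ℝ f x V = 0 → 0 ≤ ⟪fderiv ℝ (∇ f) x V, V⟫) (V : E) :
    0 ≤ ⟪fderiv ℝ (∇ f) x V, V⟫ := by
  set c := ⟪∇ f x, V⟫
  have hW : fderiv ℝ f x (V - c • ∇ f x) = 0 := by
    rw [← inner_gradient_left, inner_sub_right, real_inner_smul_right,
      real_inner_self_eq_norm_sq, hunit.self_of_nhds]
    ring
  have hnull := fderiv_gradient_apply_gradient_eq_zero hf hunit
  have hsplit : ⟪fderiv ℝ (∇ f) x V, V⟫ =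
      ⟪fderiv ℝ (∇ f) x (V - c • ∇ f x), V - c • ∇ f x⟫ := by
    rw [map_sub, map_smul, hnull, smul_zero, sub_zero, inner_sub_right, real_inner_smul_right,
      inner_fderiv_gradient_comm hf V (∇ f x), hnull, inner_zero_left, mul_zero, sub_zero]
  exact hsplit ▸ htan _ hW

theorem inner_fderiv_gradient_self_nonneg_of_add_smul_gradient (hU : IsOpen U)
    (hf : ContDiffOn ℝ 3 f U) (hunit : ∀ y ∈ U, ‖∇ f y‖ = 1)
    (hseg : ∀ t ∈ Icc 0 T, x + t • ∇ f x ∈ U) (hT : 0 ≤ T)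
    (htan : ∀ V, fderiv ℝ f (x + T • ∇ f x) V = 0 →
      0 ≤ ⟪fderiv ℝ (∇ f) (x + T • ∇ f x) V, V⟫) (V : E) :
    0 ≤ ⟪fderiv ℝ (∇ f) x V, V⟫ := by
  have hp := hU.mem_nhds (hseg T ⟨hT, le_rfl⟩)
  have hmono := antitoneOn_inner_fderiv_gradient_add_smul_gradient hU hf hunit hseg V
    (left_mem_Icc.2 hT) (right_mem_Icc.2 hT) hT
  simp only [zero_smul, add_zero] at hmono
  exact (inner_fderiv_gradient_self_nonneg_of_tangent ((hf.contDiffAt hp).of_le (by norm_num))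
    (eventually_of_mem hp hunit) htan V).trans hmono

end GradientLine

section Square

variable {F : Type*} [NormedAddCommGroup F] [NormedSpace ℝ F] {f : F → ℝ} {x : F}

theorem fderiv_sq_apply (hf : DifferentiableAt ℝ f x) (v : F) :
    fderiv ℝ (fun y => f y ^ 2) x v = 2 * f x * fderiv ℝ f x v := by
  rw [(hf.hasFDerivAt.pow 2).fderiv]
  simp [mul_assoc]

theorem fderiv_fderiv_sq_apply (hf : ContDiffAt ℝ 2 f x) (v w : F) :
    fderiv ℝ (fun y => fderiv ℝ (fun z => f z ^ 2) y w) x v =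
      2 * f x * fderiv ℝ (fun y => fderiv ℝ f y w) x v + 2 * fderiv ℝ f x v * fderiv ℝ f x w := by
  have hloc : (fun y => fderiv ℝ (fun z => f z ^ 2) y w) =ᶠ[𝓝 x]
      fun y => 2 * f y * fderiv ℝ f y w := by
    filter_upwards [hf.eventually (by simp)] with y hy
    exact fderiv_sq_apply (hy.differentiableAt two_ne_zero) w
  have hdf : DifferentiableAt ℝ (fun y => fderiv ℝ f y w) x :=
    ((hf.fderiv_right (m := 1) le_rfl).differentiableAt one_ne_zero).clm_apply
      (differentiableAt_const w)
  have hprod : HasFDerivAt (fun y => 2 * f y * fderiv ℝ f y w) _ x :=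
    ((hf.differentiableAt two_ne_zero).hasFDerivAt.const_mul 2).mul hdf.hasFDerivAt
  rw [hloc.fderiv_eq, hprod.fderiv]
  simp only [add_apply, smul_apply, smul_eq_mul]
  ring

end Square

section SignedDistance

variable {n : ℕ} {Ω U : Set (EuclideanSpace ℂ (Fin n))} {z : EuclideanSpace ℂ (Fin n)}

theorem abs_sdist (Ω : Set (EuclideanSpace ℂ (Fin n))) (z : EuclideanSpace ℂ (Fin n)) :
    |sdist Ω z| = infDist z (frontier Ω) := by
  unfold sdist
  split_ifs <;> simp [abs_of_nonneg infDist_nonneg]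

theorem sdist_of_mem (hz : z ∈ Ω) : sdist Ω z = -infDist z (frontier Ω) := if_pos hz

theorem sdist_neg (hopen : IsOpen Ω) (hne : (frontier Ω).Nonempty) (hz : z ∈ Ω) :
    sdist Ω z < 0 := by
  have hz' : z ∉ frontier Ω := fun h =>
    (disjoint_frontier_iff_isOpen.2 hopen).notMem_of_mem_left h hz
  rw [sdist_of_mem hz, neg_neg_iff_pos]
  exact (isClosed_frontier.notMem_iff_infDist_pos hne).1 hz'

theorem mem_frontier_of_sdist_eq_zero (hne : (frontier Ω).Nonempty) (hz : sdist Ω z = 0) :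
    z ∈ frontier Ω :=
  (isClosed_frontier.mem_iff_infDist_zero hne).2 (by rw [← abs_sdist, hz, abs_zero])

theorem rHess_sdist_nonneg {ε : ℝ} (hU : IsOpen U) (hδ : ContDiffOn ℝ 3 (sdist Ω) U)
    (hunit : ∀ y ∈ U, ‖∇ (sdist Ω) y‖ = 1)
    (hconv : ∀ p ∈ frontier Ω, ∀ V : EuclideanSpace ℂ (Fin n),
      fderiv ℝ (sdist Ω) p V = 0 → 0 ≤ rHess (sdist Ω) p V V)
    (hεU : thickening ε (frontier Ω) ⊆ U) (hzε : z ∈ thickening (ε / 2) (frontier Ω))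
    (hzΩ : z ∈ Ω) (V : EuclideanSpace ℂ (Fin n)) :
    0 ≤ rHess (sdist Ω) z V V := by
  obtain ⟨q, hq, -⟩ := mem_thickening_iff.1 hzε
  have hne : (frontier Ω).Nonempty := ⟨q, hq⟩
  set T := infDist z (frontier Ω)
  have hT : T < ε / 2 := (mem_thickening_iff_infDist_lt hne).1 hzε
  have hT0 : 0 ≤ T := infDist_nonneg
  have hzU : z ∈ U := hεU (thickening_mono (by linarith) _ hzε)
  have hδ2 : ContDiffOn ℝ 2 (sdist Ω) U := hδ.of_le (by norm_num)
  have hseg : ∀ t ∈ Icc 0 T, z + t • ∇ (sdist Ω) z ∈ U := fun t ht => by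
    refine hεU ((mem_thickening_iff_infDist_lt hne).2 ?_)
    calc infDist (z + t • ∇ (sdist Ω) z) (frontier Ω)
        ≤ T + dist (z + t • ∇ (sdist Ω) z) z := infDist_le_infDist_add_dist
      _ = T + t := by simp [norm_smul, hunit z hzU, abs_of_nonneg ht.1]
      _ < ε := by linarith [ht.2]
  have hp : z + T • ∇ (sdist Ω) z ∈ frontier Ω := by
    refine mem_frontier_of_sdist_eq_zero hne ?_
    rw [apply_add_smul_gradient hU hδ2 hunit hseg T ⟨hT0, le_rfl⟩,
      sdist_of_mem hzΩ, neg_add_cancel]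
  rw [rHess, fderiv_fderiv_apply_eq_inner_fderiv_gradient (hδ2.contDiffAt (hU.mem_nhds hzU))]
  refine inner_fderiv_gradient_self_nonneg_of_add_smul_gradient hU hδ hunit hseg hT0
    (fun W hW => ?_) V
  rw [← fderiv_fderiv_apply_eq_inner_fderiv_gradient
    (hδ2.contDiffAt (hU.mem_nhds (hseg T ⟨hT0, le_rfl⟩)))]
  exact hconv _ hp W hW

theorem rHess_sq_le_of_neg {f : EuclideanSpace ℂ (Fin n) → ℝ} {V : EuclideanSpace ℂ (Fin n)}
    (hf : ContDiffAt ℝ 2 f z) (hfz : f z < 0) (hH : 0 ≤ rHess f z V V) :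
    rHess (fun w => f w ^ 2) z V V ≤ (fderiv ℝ (fun w => f w ^ 2) z V) ^ 2 / (2 * f z ^ 2) := by
  rw [rHess] at hH ⊢
  rw [fderiv_fderiv_sq_apply hf, fderiv_sq_apply (hf.differentiableAt two_ne_zero)]
  have hrhs : (2 * f z * fderiv ℝ f z V) ^ 2 / (2 * f z ^ 2) = 2 * fderiv ℝ f z V ^ 2 := by
    field_simp [hfz.ne]
  rw [hrhs]
  nlinarith [mul_nonpos_of_nonpos_of_nonneg hfz.le hH]

end SignedDistance

theorem squared_distance_estimate_convex_general {n : ℕ} (Ω : Set (EuclideanSpace ℂ (Fin n)))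
    (hopen : IsOpen Ω) (hbdd : Bornology.IsBounded Ω)
    (hsmooth : HasSmoothBoundary Ω)
    (hconv : ∀ p ∈ frontier Ω, ∀ V : EuclideanSpace ℂ (Fin n),
      fderiv ℝ (sdist Ω) p V = 0 → 0 ≤ rHess (sdist Ω) p V V) :
    ∃ U : Set (EuclideanSpace ℂ (Fin n)), IsOpen U ∧ frontier Ω ⊆ U ∧
      ∀ z ∈ U ∩ Ω, ∀ V : EuclideanSpace ℂ (Fin n),
        rHess (fun w => Metric.infDist w (frontier Ω) ^ 2) z V V ≤
          (fderiv ℝ (fun w => Metric.infDist w (frontier Ω) ^ 2) z V) ^ 2 / (2 * Metric.infDist z (frontier Ω) ^ 2) := by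
  obtain ⟨U, hU, hbU, hδ, hunit⟩ := hsmooth
  have hδ3 : ContDiffOn ℝ 3 (sdist Ω) U := hδ.of_le (WithTop.coe_le_coe.2 le_top)
  have hgrad : ∀ y ∈ U, ‖∇ (sdist Ω) y‖ = 1 := fun y hy => (norm_gradient _ y).trans (hunit y hy)
  have hcpt : IsCompact (frontier Ω) := isCompact_of_isClosed_isBounded isClosed_frontier
    (hbdd.closure.subset frontier_subset_closure)
  obtain ⟨ε, hε, hεU⟩ := hcpt.exists_thickening_subset_open hU hbU
  refine ⟨thickening (ε / 2) (frontier Ω), isOpen_thickening,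
    self_subset_thickening (half_pos hε) _, ?_⟩
  rintro z ⟨hzε, hzΩ⟩ V
  have hzU : z ∈ U := hεU (thickening_mono (half_le_self hε.le) _ hzε)
  have hne : (frontier Ω).Nonempty := (mem_thickening_iff.1 hzε).imp fun _ h => h.1
  simp_rw [← abs_sdist, sq_abs]
  exact rHess_sq_le_of_neg ((hδ3.contDiffAt (hU.mem_nhds hzU)).of_le (by norm_num))
    (sdist_neg hopen hne hzΩ)
    (rHess_sdist_nonneg hU hδ3 hgrad hconv hεU hzε hzΩ V)

/-- If `Ω` is a smoothly bounded convex domain and `D = dist(·, bΩ)²`, then near `bΩ` and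
inside `Ω` one has `H_D(z)(V,V) ≤ |⟨∇D(z),V⟩|² / (2D(z))`. -/
theorem squared_distance_estimate_convex {n : ℕ} (Ω : Set (EuclideanSpace ℂ (Fin n)))
    (hopen : IsOpen Ω) (hconn : IsConnected Ω) (hbdd : Bornology.IsBounded Ω)
    (hsmooth : HasSmoothBoundary Ω)
    (hconv : ∀ p ∈ frontier Ω, ∀ V : EuclideanSpace ℂ (Fin n),
      fderiv ℝ (sdist Ω) p V = 0 → 0 ≤ rHess (sdist Ω) p V V) :
    ∃ U : Set (EuclideanSpace ℂ (Fin n)), IsOpen U ∧ frontier Ω ⊆ U ∧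
      ∀ z ∈ U ∩ Ω, ∀ V : EuclideanSpace ℂ (Fin n),
        rHess (fun w => Metric.infDist w (frontier Ω) ^ 2) z V V ≤
          (fderiv ℝ (fun w => Metric.infDist w (frontier Ω) ^ 2) z V) ^ 2 / (2 * Metric.infDist z (frontier Ω) ^ 2) :=
  squared_distance_estimate_convex_general Ω hopen hbdd hsmooth hconv
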